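/- arXiv:0912.1233 — 2 statements merged into one kernel-verified Lean document; each statement's English description precedes it below -/
import Mathlib

section
/- Let σd = 4 and assume the critical Gagliardo–Nirenberg inequality with sharp constant B holds on H²(R^d), with P_cr = ((σ+1)/B)^{1/σ}. If ψ is an H²-solution of the critical biharmonic NLS conserving the L² norm and the Hamiltonian, and if ‖ψ_0‖_2² < P_cr, then ‖Δψ(t)‖_2² ≤ H[ψ_0] / (1 - (‖ψ_0‖_2²/P_cr)^σ) for all t in the lifespan; in particular the H² norm stays bounded and the solution cannot blow up. -/
open MeasureTheory

/-- Laplacian as the sum of second partial derivatives. -/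
noncomputable def lap {d : ℕ} (f : (Fin d → ℝ) → ℂ) (x : Fin d → ℝ) : ℂ :=
  ∑ i, deriv (deriv (fun y => f (Function.update x i y))) (x i)

/-- Global bound for the critical BNLS below the critical power: if
`‖ψ₀‖₂² < P_cr = ((σ+1)/B)^{1/σ}` (with `σ = 4/d` and `B` the sharp
Gagliardo–Nirenberg constant), and the solution conserves power and Hamiltonian,
then `‖Δψ(t)‖₂² ≤ H[ψ₀]/(1 - (‖ψ₀‖₂²/P_cr)^σ)` throughout the lifespan. -/
theorem critical_bnls_global_bound (d : ℕ) (hd : 1 ≤ d) (σ T B : ℝ)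
    (hσ : σ = 4 / d) (hB : 0 < B) (hT : 0 < T)
    (hGN : ∀ f : SchwartzMap ((Fin d) → ℝ) ℂ,
      (∫ x, ‖f x‖ ^ (2 * (σ + 1))) ≤
        B * (∫ x, ‖lap (⇑f) x‖ ^ 2) * (∫ x, ‖f x‖ ^ 2) ^ σ)
    (ψ : ℝ → SchwartzMap ((Fin d) → ℝ) ℂ)
    (hSol : ∀ t ∈ Set.Ico (0:ℝ) T, ∀ x,
      Complex.I * deriv (fun s => ψ s x) t - lap (lap (⇑(ψ t))) x
        + (‖ψ t x‖ ^ (2 * σ) : ℝ) • ψ t x = 0)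
    (hPow : ∀ t ∈ Set.Ico (0:ℝ) T, (∫ x, ‖ψ t x‖ ^ 2) = ∫ x, ‖ψ 0 x‖ ^ 2)
    (hHam : ∀ t ∈ Set.Ico (0:ℝ) T,
      (∫ x, ‖lap (⇑(ψ t)) x‖ ^ 2) - (1 / (σ + 1)) * (∫ x, ‖ψ t x‖ ^ (2 * (σ + 1)))
        = (∫ x, ‖lap (⇑(ψ 0)) x‖ ^ 2) - (1 / (σ + 1)) * ∫ x, ‖ψ 0 x‖ ^ (2 * (σ + 1)))
    (hMass : (∫ x, ‖ψ 0 x‖ ^ 2) < ((σ + 1) / B) ^ (1 / σ)) :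
    ∀ t ∈ Set.Ico (0:ℝ) T,
      (∫ x, ‖lap (⇑(ψ t)) x‖ ^ 2) ≤
        ((∫ x, ‖lap (⇑(ψ 0)) x‖ ^ 2) - (1 / (σ + 1)) * ∫ x, ‖ψ 0 x‖ ^ (2 * (σ + 1)))
          / (1 - ((∫ x, ‖ψ 0 x‖ ^ 2) / ((σ + 1) / B) ^ (1 / σ)) ^ σ) := by
  intro t ht
  have hd0 : (0:ℝ) < d := by exact_mod_cast Nat.lt_of_lt_of_le Nat.zero_lt_one hd
  have hσpos : 0 < σ := by rw [hσ]; positivity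
  have hσ1 : 0 < σ + 1 := by linarith
  set M : ℝ := ∫ x, ‖ψ 0 x‖ ^ 2 with hM
  have hM0 : 0 ≤ M := integral_nonneg fun x => by positivity
  set P : ℝ := ((σ + 1) / B) ^ (1 / σ) with hPdef
  have hP : 0 < P := Real.rpow_pos_of_pos (by positivity) _
  have hPσ : P ^ σ = (σ + 1) / B := by
    rw [hPdef, ← Real.rpow_mul (by positivity), one_div,
      inv_mul_cancel₀ hσpos.ne', Real.rpow_one]
  set θ : ℝ := (M / P) ^ σ with hθdef
  have hθ1 : θ < 1 :=
    Real.rpow_lt_one (by positivity) ((div_lt_one hP).2 hMass) hσpos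
  have hθeq : θ = B * M ^ σ / (σ + 1) := by
    rw [hθdef, Real.div_rpow hM0 hP.le, hPσ]
    field_simp
  set K : ℝ := ∫ x, ‖lap (⇑(ψ t)) x‖ ^ 2 with hK
  set N : ℝ := ∫ x, ‖ψ t x‖ ^ (2 * (σ + 1)) with hN
  have hGNt : N ≤ B * K * M ^ σ := by
    have := hGN (ψ t)
    rwa [hPow t ht] at this
  have hH := hHam t ht
  rw [le_div_iff₀ (by linarith : (0:ℝ) < 1 - θ)]
  have h1 : (1 / (σ + 1)) * N ≤ (1 / (σ + 1)) * (B * K * M ^ σ) :=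
    mul_le_mul_of_nonneg_left hGNt (by positivity)
  have h2 : (1 / (σ + 1)) * (B * K * M ^ σ) = θ * K := by
    rw [hθeq]; field_simp
  have h3 : K * (1 - θ) = K - θ * K := by ring
  linarith
end

section
/- Let σ, d satisfy σd > 4 and σ(d-4) < 4, and let B : (0,∞) → C behave asymptotically like B(ρ) ~ c ρ^{-(2/(3σ))(σd-1)} e^{iθ(ρ)} with phase θ(ρ) = -(3/4) b ρ^{4/3} - (1/(3b³)) log ρ for constants c ≠ 0, b > 0 (the WKB profile B_2). Then B'' ∉ L²(R^d, ρ^{d-1} dρ): the integral ∫_1^∞ |B''(ρ)|² ρ^{d-1} dρ diverges. More precisely, |B''(ρ)|² grows like ρ^{-(4/(3σ))(σd-1) + 4/3}, and the exponent -(4/(3σ))(σd-1-σ) + d - 1 is ≥ -1 exactly when σ(d-4) < 4. -/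
/-!
Write `B = c · exp ψ` on `[1, ∞)` with `ψ(ρ) = (a - i k) log ρ - (3/4) i b ρ^{4/3}`, where
`a = -(2/(3σ))(σd - 1)` and `k = 1/(3b³)`. Then `B'' = B (ψ'² + ψ'')` and `|B| = |c| ρ^a`, while
`ρ^{-1/3} ψ' → -i b` and `ρ^{-2/3} ψ'' → 0`; hence `|B''|² ~ |c|² b⁴ ρ^{2a + 4/3}`. The weighted
integrand is then comparable to `ρ^E` with `E + 1 = (4 - σ(d - 4))/(3σ) > 0`, which is not
integrable at infinity.
-/

open MeasureTheory Filter Topology Asymptotics Set Complex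

theorem not_integrableOn_Ici_of_tendsto_div_rpow {f : ℝ → ℝ} {C E : ℝ} (a : ℝ) (hC : C ≠ 0)
    (hE : -1 ≤ E) (hf : Tendsto (fun x => f x / x ^ E) atTop (𝓝 C)) :
    ¬ IntegrableOn f (Ici a) := fun hint =>
  have hO : (fun x : ℝ => x ^ E) =O[atTop] f := isBigO_of_div_tendsto_nhds_of_ne_zero hf hC
  hE.not_gt <| integrableAtFilter_rpow_atTop_iff.mp <|
    hO.integrableAtFilter
      (measurable_id.pow_const E).aestronglyMeasurable.stronglyMeasurableAtFilter
      (integrableAtFilter_atTop_iff.mpr ⟨a, hint⟩)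

theorem Filter.Tendsto.mul_rpow_div_rpow_add {f : ℝ → ℝ} {C E : ℝ} (m : ℝ)
    (hf : Tendsto (fun x => f x / x ^ E) atTop (𝓝 C)) :
    Tendsto (fun x => f x * x ^ m / x ^ (E + m)) atTop (𝓝 C) := by
  refine hf.congr' ?_
  filter_upwards [eventually_gt_atTop 0] with x hx
  rw [Real.rpow_add hx, mul_div_mul_right _ _ (Real.rpow_pos_of_pos hx m).ne']

lemma deriv_deriv_const_mul_cexp {ψ ψ' ψ'' : ℝ → ℂ} {U : Set ℝ} (hU : IsOpen U) (c : ℂ)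
    (hψ : ∀ x ∈ U, HasDerivAt ψ (ψ' x) x) (hψ' : ∀ x ∈ U, HasDerivAt ψ' (ψ'' x) x) :
    EqOn (deriv (deriv fun x => c * cexp (ψ x)))
      (fun x => c * cexp (ψ x) * (ψ' x ^ 2 + ψ'' x)) U := by
  have h1 : EqOn (deriv fun x => c * cexp (ψ x)) (fun x => c * cexp (ψ x) * ψ' x) U :=
    fun x hx => (((hψ x hx).cexp).const_mul c).deriv.trans (by ring)
  intro x hx
  rw [h1.deriv hU hx]
  exact ((((hψ x hx).cexp).const_mul c).mul (hψ' x hx)).deriv.trans (by ring)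

lemma ofReal_rpow_mul_rpow {ρ : ℝ} (hρ : 0 < ρ) (s t : ℝ) :
    ((ρ ^ s : ℝ) : ℂ) * ((ρ ^ t : ℝ) : ℂ) = ((ρ ^ (s + t) : ℝ) : ℂ) := by
  rw [Real.rpow_add hρ, ofReal_mul]

noncomputable section
namespace LogRpowPhase

variable (α β : ℂ) (p : ℝ)

def phase (ρ : ℝ) : ℂ := α * Real.log ρ + β * (ρ ^ p : ℝ)

def phaseDeriv (ρ : ℝ) : ℂ := α * (ρ ^ (-1 : ℝ) : ℝ) + β * (p * ρ ^ (p - 1) : ℝ)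

def phaseDeriv2 (ρ : ℝ) : ℂ :=
  -α * (ρ ^ (-2 : ℝ) : ℝ) + β * (p * (p - 1) * ρ ^ (p - 2) : ℝ)

variable {α β p}

lemma hasDerivAt_phase {ρ : ℝ} (hρ : 0 < ρ) :
    HasDerivAt (phase α β p) (phaseDeriv α β p ρ) ρ := by
  have hlog := (Real.hasDerivAt_log hρ.ne').ofReal_comp
  have hpow := (Real.hasDerivAt_rpow_const (p := p) (Or.inl hρ.ne')).ofReal_comp
  rw [← Real.rpow_neg_one] at hlog
  exact (hlog.const_mul α).add (hpow.const_mul β)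

lemma hasDerivAt_phaseDeriv {ρ : ℝ} (hρ : 0 < ρ) :
    HasDerivAt (phaseDeriv α β p) (phaseDeriv2 α β p ρ) ρ := by
  have hinv := (Real.hasDerivAt_rpow_const (p := -1) (Or.inl hρ.ne')).ofReal_comp
  have hpow := ((Real.hasDerivAt_rpow_const (p := p - 1) (Or.inl hρ.ne')).const_mul p).ofReal_comp
  refine ((hinv.const_mul α).add (hpow.const_mul β)).congr_deriv ?_
  simp only [phaseDeriv2]
  push_cast
  ring_nf

lemma tendsto_rpow_mul_phaseDeriv (hp : 0 < p) :
    Tendsto (fun ρ : ℝ => ((ρ ^ (1 - p) : ℝ) : ℂ) * phaseDeriv α β p ρ) atTop (𝓝 (p * β)) := by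
  have h : Tendsto (fun ρ : ℝ => α * ((ρ ^ (-p) : ℝ) : ℂ) + p * β) atTop (𝓝 (α * 0 + p * β)) :=
    ((tendsto_rpow_neg_atTop hp).ofReal.const_mul α).add_const _
  rw [mul_zero, zero_add] at h
  refine h.congr' ?_
  filter_upwards [eventually_gt_atTop 0] with ρ hρ
  have e1 := ofReal_rpow_mul_rpow hρ (1 - p) (-1)
  have e2 := ofReal_rpow_mul_rpow hρ (1 - p) (p - 1)
  rw [show 1 - p + -1 = -p by ring] at e1
  rw [show 1 - p + (p - 1) = 0 by ring, Real.rpow_zero, ofReal_one] at e2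
  simp only [phaseDeriv]
  push_cast
  linear_combination -α * e1 - p * β * e2

lemma tendsto_rpow_mul_phaseDeriv2 (hp : 0 < p) :
    Tendsto (fun ρ : ℝ => ((ρ ^ (2 - 2 * p) : ℝ) : ℂ) * phaseDeriv2 α β p ρ) atTop (𝓝 0) := by
  have h : Tendsto (fun ρ : ℝ => -α * ((ρ ^ (-(2 * p)) : ℝ) : ℂ)
      + p * (p - 1) * β * ((ρ ^ (-p) : ℝ) : ℂ)) atTop (𝓝 (-α * 0 + p * (p - 1) * β * 0)) :=
    ((tendsto_rpow_neg_atTop (by positivity)).ofReal.const_mul _).add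
      ((tendsto_rpow_neg_atTop hp).ofReal.const_mul _)
  rw [mul_zero, mul_zero, add_zero] at h
  refine h.congr' ?_
  filter_upwards [eventually_gt_atTop 0] with ρ hρ
  have e1 := ofReal_rpow_mul_rpow hρ (2 - 2 * p) (-2)
  have e2 := ofReal_rpow_mul_rpow hρ (2 - 2 * p) (p - 2)
  rw [show 2 - 2 * p + -2 = -(2 * p) by ring] at e1
  rw [show 2 - 2 * p + (p - 2) = -p by ring] at e2
  simp only [phaseDeriv2]
  push_cast
  linear_combination α * e1 - p * (p - 1) * β * e2

lemma tendsto_rpow_mul_phaseDeriv_sq_add_phaseDeriv2 (hp : 0 < p) :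
    Tendsto (fun ρ : ℝ => ((ρ ^ (2 - 2 * p) : ℝ) : ℂ) *
      (phaseDeriv α β p ρ ^ 2 + phaseDeriv2 α β p ρ)) atTop (𝓝 ((p * β) ^ 2)) := by
  have h := ((tendsto_rpow_mul_phaseDeriv (α := α) (β := β) hp).pow 2).add
    (tendsto_rpow_mul_phaseDeriv2 (α := α) (β := β) hp)
  rw [add_zero] at h
  refine h.congr' ?_
  filter_upwards [eventually_gt_atTop 0] with ρ hρ
  have e := ofReal_rpow_mul_rpow hρ (1 - p) (1 - p)
  rw [show 1 - p + (1 - p) = 2 - 2 * p by ring] at e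
  linear_combination phaseDeriv α β p ρ ^ 2 * e

end LogRpowPhase

end

open LogRpowPhase in
theorem tendsto_norm_sq_deriv_deriv_div_rpow {α β c : ℂ} {p : ℝ} (hp : 0 < p) (hβ : β.re = 0)
    {B : ℝ → ℂ} (hB : ∀ ρ ≥ 1, B ρ = c * cexp (phase α β p ρ)) :
    Tendsto (fun ρ => ‖deriv (deriv B) ρ‖ ^ 2 / ρ ^ (2 * α.re + 4 * p - 4)) atTop
      (𝓝 (‖c‖ ^ 2 * ‖p * β‖ ^ 4)) := by
  have hB'' : EqOn (deriv (deriv B))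
      (fun ρ => c * cexp (phase α β p ρ) * (phaseDeriv α β p ρ ^ 2 + phaseDeriv2 α β p ρ))
      (Ioi 1) := by
    have hEq : EqOn B (fun ρ => c * cexp (phase α β p ρ)) (Ioi 1) :=
      fun ρ hρ => hB ρ hρ.le
    have hpos : ∀ ρ ∈ Ioi (1 : ℝ), 0 < ρ := fun ρ hρ => one_pos.trans hρ
    exact ((hEq.deriv isOpen_Ioi).deriv isOpen_Ioi).trans
      (deriv_deriv_const_mul_cexp isOpen_Ioi c (fun ρ hρ => hasDerivAt_phase (hpos ρ hρ))
        (fun ρ hρ => hasDerivAt_phaseDeriv (hpos ρ hρ)))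
  have h := ((tendsto_rpow_mul_phaseDeriv_sq_add_phaseDeriv2 (α := α) (β := β) hp).norm.pow
    2).const_mul (‖c‖ ^ 2)
  rw [norm_pow, ← pow_mul] at h
  refine h.congr' ?_
  filter_upwards [eventually_gt_atTop 1] with ρ hρ
  have hρ0 : 0 < ρ := one_pos.trans hρ
  have hexp : ‖cexp (phase α β p ρ)‖ = ρ ^ α.re := by
    rw [norm_exp, Real.rpow_def_of_pos hρ0]
    simp [phase, hβ, mul_comm]
  have hpow : ρ ^ (2 * α.re + 4 * p - 4) * (ρ ^ (2 - 2 * p)) ^ 2 = (ρ ^ α.re) ^ 2 := by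
    simp only [← Real.rpow_natCast, ← Real.rpow_mul hρ0.le, ← Real.rpow_add hρ0]
    ring_nf
  rw [hB'' hρ, norm_mul, norm_mul, norm_mul, hexp, norm_real, Real.norm_of_nonneg (by positivity),
    eq_div_iff (by positivity)]
  linear_combination ‖c‖ ^ 2 * ‖phaseDeriv α β p ρ ^ 2 + phaseDeriv2 α β p ρ‖ ^ 2 * hpow

theorem tendsto_wkbProfile_norm_sq_deriv_deriv_div_rpow (a b k : ℝ) (c : ℂ) (B : ℝ → ℂ)
    (hB : ∀ ρ ≥ (1 : ℝ), B ρ = c * ((ρ ^ a : ℝ) : ℂ) *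
      cexp (I * ((-(3 / 4) * b * ρ ^ ((4 : ℝ) / 3) - k * Real.log ρ : ℝ) : ℂ))) :
    Tendsto (fun ρ => ‖deriv (deriv B) ρ‖ ^ 2 / ρ ^ (2 * a + 4 / 3)) atTop
      (𝓝 (‖c‖ ^ 2 * b ^ 4)) := by
  have hB' : ∀ ρ ≥ (1 : ℝ),
      B ρ = c * cexp (LogRpowPhase.phase (a - k * I) (-(3 / 4) * b * I) (4 / 3) ρ) := by
    intro ρ hρ
    rw [hB ρ hρ, Real.rpow_def_of_pos (one_pos.trans_le hρ), ofReal_exp, mul_assoc,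
      ← Complex.exp_add, LogRpowPhase.phase]
    push_cast
    ring_nf
  have h := tendsto_norm_sq_deriv_deriv_div_rpow (by norm_num) (by simp) hB'
  convert h using 3
  · congr 1
    simp only [sub_re, ofReal_re, mul_re, I_re, I_im, ofReal_im]
    ring
  · rw [show ((4 / 3 : ℝ) : ℂ) * (-(3 / 4) * b * I) = ((-b : ℝ) : ℂ) * I by push_cast; ring,
      norm_mul, norm_real, norm_I, mul_one, Real.norm_eq_abs, abs_neg, Even.pow_abs (by decide)]

theorem wkb_profile_B2_not_H2_general (d : ℕ) (σ b : ℝ) (c : ℂ)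
    (hσ : 0 < σ) (hb : 0 < b) (hc : c ≠ 0)
    (hsub : σ * ((d : ℝ) - 4) < 4)
    (B : ℝ → ℂ)
    (hB : ∀ ρ ≥ (1:ℝ), B ρ =
      c * ((ρ ^ (-(2 / (3 * σ)) * (σ * d - 1)) : ℝ) : ℂ) *
        Complex.exp (Complex.I *
          (((-(3 / 4) * b * ρ ^ ((4:ℝ)/3) - (1 / (3 * b ^ 3)) * Real.log ρ : ℝ)) : ℂ))) :
    ¬ MeasureTheory.IntegrableOn
        (fun ρ => ‖deriv (deriv B) ρ‖ ^ 2 * ρ ^ ((d : ℝ) - 1)) (Set.Ici 1) ∧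
    (∃ C > 0, Filter.Tendsto
      (fun ρ => ‖deriv (deriv B) ρ‖ ^ 2 / ρ ^ (-(4 / (3 * σ)) * (σ * d - 1) + 4/3))
      Filter.atTop (nhds C)) ∧
    (-(4 / (3 * σ)) * (σ * d - 1 - σ) + d - 1 ≥ -1 ↔ σ * ((d : ℝ) - 4) < 4) := by
  have hlim := tendsto_wkbProfile_norm_sq_deriv_deriv_div_rpow _ b _ c B hB
  rw [show 2 * (-(2 / (3 * σ)) * (σ * d - 1)) + 4 / 3 = -(4 / (3 * σ)) * (σ * d - 1) + 4 / 3 by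
    ring] at hlim
  have hweight : -(4 / (3 * σ)) * (σ * d - 1 - σ) + d - 1 =
      -(4 / (3 * σ)) * (σ * d - 1) + 4 / 3 + ((d : ℝ) - 1) := by
    field_simp
    ring
  have hexponent : -1 ≤ -(4 / (3 * σ)) * (σ * d - 1 - σ) + d - 1 := by
    have hcritical : -(4 / (3 * σ)) * (σ * d - 1 - σ) + d - 1 + 1 =
        (4 - σ * ((d : ℝ) - 4)) / (3 * σ) := by
      field_simp
      ring
    have hpos : 0 < (4 - σ * ((d : ℝ) - 4)) / (3 * σ) := div_pos (by linarith) (by positivity)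
    linarith
  have hC : 0 < ‖c‖ ^ 2 * b ^ 4 := by positivity
  refine ⟨?_, ⟨_, hC, hlim⟩, iff_of_true hexponent hsub⟩
  exact not_integrableOn_Ici_of_tendsto_div_rpow 1 hC.ne' (hweight ▸ hexponent)
    (hlim.mul_rpow_div_rpow_add _)

/-- The WKB profile `B₂` fails to have a square-integrable second derivative:
for `B(ρ) = c ρ^{-(2/(3σ))(σd-1)} e^{iθ(ρ)}` with
`θ(ρ) = -(3/4)bρ^{4/3} - (1/(3b³)) log ρ`, the integral
`∫_1^∞ |B''(ρ)|² ρ^{d-1} dρ` diverges; `|B''(ρ)|²` grows like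
`ρ^{-(4/(3σ))(σd-1)+4/3}`, and the resulting exponent
`-(4/(3σ))(σd-1-σ) + d - 1` is `≥ -1` exactly when `σ(d-4) < 4`. -/
theorem wkb_profile_B2_not_H2 (d : ℕ) (σ b : ℝ) (c : ℂ)
    (hσ : 0 < σ) (hb : 0 < b) (hc : c ≠ 0)
    (hsup : 4 < σ * d) (hsub : σ * ((d : ℝ) - 4) < 4)
    (B : ℝ → ℂ)
    (hB : ∀ ρ ≥ (1:ℝ), B ρ =
      c * ((ρ ^ (-(2 / (3 * σ)) * (σ * d - 1)) : ℝ) : ℂ) *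
        Complex.exp (Complex.I *
          (((-(3 / 4) * b * ρ ^ ((4:ℝ)/3) - (1 / (3 * b ^ 3)) * Real.log ρ : ℝ)) : ℂ))) :
    ¬ MeasureTheory.IntegrableOn
        (fun ρ => ‖deriv (deriv B) ρ‖ ^ 2 * ρ ^ ((d : ℝ) - 1)) (Set.Ici 1) ∧
    (∃ C > 0, Filter.Tendsto
      (fun ρ => ‖deriv (deriv B) ρ‖ ^ 2 / ρ ^ (-(4 / (3 * σ)) * (σ * d - 1) + 4/3))
      Filter.atTop (nhds C)) ∧
    (-(4 / (3 * σ)) * (σ * d - 1 - σ) + d - 1 ≥ -1 ↔ σ * ((d : ℝ) - 4) < 4) :=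
  wkb_profile_B2_not_H2_general d σ b c hσ hb hc hsub B hB
end
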